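/- Fix p ∈ (0,1) and let K be a p-core CRG (i.e., the minimum g_K(p) is attained by a unique probability mass μ which has full support). Suppose x ≠ y are vertices of K with the edge xy not gray. If K′ is obtained from K by recoloring the edge xy gray, then g_{K′}(p) < g_K(p). -/

import Mathlib

open Finset

inductive EColor | white | black | gray
deriving DecidableEq

/-- The `p`-weight of an edge color: `p` for white, `1-p` for black, `0` for gray. -/
def wval (p : ℝ) : EColor → ℝ
  | .white => p
  | .black => 1 - p
  | .gray => 0

/-- The matrix `M_K(p)` of a CRG given by vertex colors `vb` (`true` = black)
and edge colors `ec`. -/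
def Mmat {V : Type*} [DecidableEq V] (vb : V → Bool) (ec : V → V → EColor) (p : ℝ)
    (x y : V) : ℝ :=
  if x = y then (if vb x then 1 - p else p) else wval p (ec x y)

/-- `μ` is a probability mass. -/
def IsProb {V : Type*} [Fintype V] (μ : V → ℝ) : Prop :=
  (∀ x, 0 ≤ μ x) ∧ ∑ x, μ x = 1

/-- The quadratic form `⟨μ, M_K(p) μ⟩`. -/
def QF {V : Type*} [Fintype V] [DecidableEq V] (vb : V → Bool) (ec : V → V → EColor)
    (p : ℝ) (μ : V → ℝ) : ℝ :=
  ∑ x, ∑ y, μ x * Mmat vb ec p x y * μ y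

/-- `g` is the minimum of the quadratic form over probability masses, i.e. `g = g_K(p)`. -/
def gIs {V : Type*} [Fintype V] [DecidableEq V] (vb : V → Bool) (ec : V → V → EColor)
    (p g : ℝ) : Prop :=
  IsLeast {t | ∃ μ : V → ℝ, IsProb μ ∧ t = QF vb ec p μ} g

/-- The weighted gray-degree `d_G(u) = ∑_{v : uv gray} μ(v)`. -/
def grayDeg {V : Type*} [Fintype V] [DecidableEq V] (ec : V → V → EColor) (μ : V → ℝ)
    (u : V) : ℝ :=
  ∑ v ∈ Finset.univ.filter (fun v => v ≠ u ∧ ec u v = EColor.gray), μ v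

/-! Evaluating the recolored form at the old minimizer `μ` drops exactly the two terms
`μ x · M_xy · μ y > 0`, so `g' ≤ QF' μ < QF μ = g`. -/

lemma wval_pos {p : ℝ} (hp0 : 0 < p) (hp1 : p < 1) {c : EColor} (hc : c ≠ EColor.gray) :
    0 < wval p c := by
  cases c <;> simp_all [wval]

lemma sum_sum_mul_ite_eq_and {V R : Type*} [Fintype V] [DecidableEq V]
    [NonUnitalNonAssocSemiring R] (f h : V → R) (u v : V) (c : R) :
    ∑ a, ∑ b, f a * (if a = u ∧ b = v then c else 0) * h b = f u * c * h v := by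
  simp [ite_and, Finset.sum_ite_eq']

section RecolorGray

variable {V : Type*} [DecidableEq V] {vb : V → Bool} {ec ec' : V → V → EColor}
  {p : ℝ} {x y : V}

lemma Mmat_recolor_gray (hsymm : ∀ a b, ec a b = ec b a) (hxy : x ≠ y)
    (hec' : ∀ a b, ec' a b =
      if (a = x ∧ b = y) ∨ (a = y ∧ b = x) then EColor.gray else ec a b) (a b : V) :
    Mmat vb ec' p a b = Mmat vb ec p a b
      - ((if a = x ∧ b = y then wval p (ec x y) else 0)
        + (if a = y ∧ b = x then wval p (ec x y) else 0)) := by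
  rcases em (a = x ∧ b = y) with ⟨rfl, rfl⟩ | hnxy
  · simp [Mmat, hec', hxy, wval]
  rcases em (a = y ∧ b = x) with ⟨rfl, rfl⟩ | hnyx
  · simp [Mmat, hec', hxy.symm, wval, hsymm a b]
  simp [Mmat, hec', hnxy, hnyx]

lemma QF_recolor_gray [Fintype V] (hsymm : ∀ a b, ec a b = ec b a) (hxy : x ≠ y)
    (hec' : ∀ a b, ec' a b =
      if (a = x ∧ b = y) ∨ (a = y ∧ b = x) then EColor.gray else ec a b) (μ : V → ℝ) :
    QF vb ec' p μ = QF vb ec p μ - 2 * (μ x * wval p (ec x y) * μ y) := by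
  simp only [QF, Mmat_recolor_gray hsymm hxy hec', mul_sub, sub_mul, mul_add, add_mul,
    Finset.sum_sub_distrib, Finset.sum_add_distrib, sum_sum_mul_ite_eq_and]
  ring

end RecolorGray

theorem stmt2_general {V : Type*} [Fintype V] [DecidableEq V]
    (vb : V → Bool) (ec : V → V → EColor) (p g : ℝ) (hp0 : 0 < p) (hp1 : p < 1)
    (hsymm : ∀ a b, ec a b = ec b a)
    (μ : V → ℝ) (hμ : IsProb μ) (hμg : QF vb ec p μ = g)
    (hfull : ∀ x, 0 < μ x)
    (x y : V) (hxy : x ≠ y) (hng : ec x y ≠ EColor.gray)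
    (ec' : V → V → EColor)
    (hec' : ∀ a b, ec' a b =
      if (a = x ∧ b = y) ∨ (a = y ∧ b = x) then EColor.gray else ec a b)
    (g' : ℝ) (hg' : gIs vb ec' p g') :
    g' < g := by
  have hle : g' ≤ QF vb ec' p μ := hg'.2 ⟨μ, hμ, rfl⟩
  have hdrop : 0 < μ x * wval p (ec x y) * μ y :=
    mul_pos (mul_pos (hfull x) (wval_pos hp0 hp1 hng)) (hfull y)
  rw [QF_recolor_gray hsymm hxy hec', hμg] at hle
  linarith

/-- recoloring a non-gray edge of a `p`-core CRG gray strictly decreases `g`. -/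
theorem stmt2 {V : Type*} [Fintype V] [DecidableEq V]
    (vb : V → Bool) (ec : V → V → EColor) (p g : ℝ) (hp0 : 0 < p) (hp1 : p < 1)
    (hsymm : ∀ a b, ec a b = ec b a)
    (μ : V → ℝ) (hμ : IsProb μ) (hμg : QF vb ec p μ = g)
    (hmin : gIs vb ec p g)
    (huniq : ∀ ν : V → ℝ, IsProb ν → QF vb ec p ν = g → ν = μ)
    (hfull : ∀ x, 0 < μ x)
    (x y : V) (hxy : x ≠ y) (hng : ec x y ≠ EColor.gray)
    (ec' : V → V → EColor)
    (hec' : ∀ a b, ec' a b =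
      if (a = x ∧ b = y) ∨ (a = y ∧ b = x) then EColor.gray else ec a b)
    (g' : ℝ) (hg' : gIs vb ec' p g') :
    g' < g :=
  stmt2_general vb ec p g hp0 hp1 hsymm μ hμ hμg hfull x y hxy hng ec' hec' g' hg'
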